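/- Let 𝒜 be a finite alphabet and ℱ ⊆ 𝒜⁺ a set of forbidden factors. Suppose there exists a real β > 1 such that |ℒ_{n+1}(𝒜,ℱ)| ≥ β·|ℒ_n(𝒜,ℱ)| for all n ≥ 0, and such that C := 1 − Σ_{f∈ℱ} (|f|−1)·β^{−|f|} > 0. Then for all n ≥ 0, α(𝒜,ℱ)^n ≤ |ℒ_n(𝒜,ℱ)| ≤ C^{−1}·α(𝒜,ℱ)^n. -/

import Mathlib

open Filter

set_option linter.unusedSectionVars false
set_option linter.unusedVariables false

/-- The set of words of length `n` over the alphabet `A` avoiding every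
forbidden factor in `F` (no element of `F` occurs as a contiguous subword). -/
def langN {A : Type*} (F : Set (List A)) (n : ℕ) : Set (List A) :=
  {w | w.length = n ∧ ∀ f ∈ F, ¬ f <:+: w}

section Aux
variable {A : Type*} [Fintype A] {F : Set (List A)}

lemma langN_finite (F : Set (List A)) (n : ℕ) : (langN F n).Finite :=
  (List.finite_length_eq A n).subset fun _ hw => hw.1

lemma infix_mem_langN {w u : List A} {n k : ℕ} (hw : w ∈ langN F n)
    (hu : u <:+: w) (hk : u.length = k) : u ∈ langN F k :=
  ⟨hk, fun f hf h => hw.2 f hf (h.trans hu)⟩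

lemma langN_zero (hF : ∀ f ∈ F, f ≠ []) : langN F 0 = {([] : List A)} := by
  ext w
  constructor
  · rintro ⟨hl, -⟩
    simpa using List.length_eq_zero_iff.mp hl
  · rintro rfl
    exact ⟨rfl, fun f hf h => hF f hf (List.infix_nil.mp h)⟩

lemma ncard_biUnion_le' {ι X : Type*} (I : Finset ι) (s : ι → Set X) :
    (⋃ i ∈ I, s i).ncard ≤ ∑ i ∈ I, (s i).ncard := by
  classical
  induction I using Finset.induction_on with
  | empty => simp
  | @insert a s ha ih =>
    rw [Finset.set_biUnion_insert, Finset.sum_insert ha]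
    exact le_trans (Set.ncard_union_le _ _) (by omega)

lemma ncard_prod' {X Y : Type*} (s : Set X) (t : Set Y) :
    (s ×ˢ t).ncard = s.ncard * t.ncard := by
  rw [← Nat.card_coe_set_eq, ← Nat.card_coe_set_eq, ← Nat.card_coe_set_eq,
    ← Nat.card_prod]
  exact Nat.card_congr (Equiv.Set.prod s t)

lemma L_submul (F : Set (List A)) (m n : ℕ) :
    (langN F (m + n)).ncard ≤ (langN F m).ncard * (langN F n).ncard := by
  rw [← ncard_prod']
  refine Set.ncard_le_ncard_of_injOn (fun w => (w.take m, w.drop m)) ?_ ?_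
    ((langN_finite F m).prod (langN_finite F n))
  · intro w hw
    refine Set.mem_prod.mpr ⟨?_, ?_⟩
    · exact infix_mem_langN hw (List.take_prefix m w).isInfix
        (by rw [List.length_take, hw.1]; omega)
    · exact infix_mem_langN hw (List.drop_suffix m w).isInfix
        (by rw [List.length_drop, hw.1]; omega)
  · intro w1 _ w2 _ h
    have h1 : w1.take m = w2.take m := congrArg Prod.fst h
    have h2 : w1.drop m = w2.drop m := congrArg Prod.snd h
    rw [← List.take_append_drop m w1, h1, h2, List.take_append_drop]

/-- pairs whose concatenation is still admissible -/
def Goodset (F : Set (List A)) (m n : ℕ) : Set (List A × List A) :=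
  {q | q.1 ∈ langN F m ∧ q.2 ∈ langN F n ∧ q.1 ++ q.2 ∈ langN F (m + n)}

lemma good_card (F : Set (List A)) (m n : ℕ) :
    (Goodset F m n).ncard ≤ (langN F (m + n)).ncard := by
  refine Set.ncard_le_ncard_of_injOn (fun q => q.1 ++ q.2) (fun q hq => hq.2.2) ?_
    (langN_finite F (m + n))
  · intro q1 hq1 q2 hq2 h
    replace h : q1.1 ++ q1.2 = q2.1 ++ q2.2 := h
    have e1 : q1.1 = q2.1 := by
      rw [← List.take_left' (i := m) (l₂ := q1.2) hq1.1.1,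
        ← List.take_left' (i := m) (l₂ := q2.2) hq2.1.1, h]
    have e2 : q1.2 = q2.2 := by
      rw [← List.drop_left' (i := m) (l₂ := q1.2) hq1.1.1,
        ← List.drop_left' (i := m) (l₂ := q2.2) hq2.1.1, h]
    exact Prod.ext e1 e2

/-- bad pairs: concatenation contains `f` starting at position `p` -/
def BadFP (F : Set (List A)) (m n : ℕ) (f : List A) (p : ℕ) : Set (List A × List A) :=
  {q | q.1 ∈ langN F m ∧ q.2 ∈ langN F n ∧
    ∃ x y : List A, (x ++ f) ++ y = q.1 ++ q.2 ∧ x.length = p}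

lemma badFP_card (F : Set (List A)) {m n : ℕ} {f : List A} {p : ℕ}
    (hp : p < m) (hpf : m < p + f.length) :
    (BadFP F m n f p).ncard ≤
      (langN F p).ncard * (langN F (m + n - f.length - p)).ncard := by
  rw [← ncard_prod']
  refine Set.ncard_le_ncard_of_injOn
    (fun q => ((q.1 ++ q.2).take p, (q.1 ++ q.2).drop (p + f.length))) ?_ ?_
    ((langN_finite F p).prod (langN_finite F _))
  · rintro q ⟨h1, h2, x, y, e, hx⟩
    have hlen : x.length + f.length + y.length = m + n := by
      have := congrArg List.length e
      simp only [List.length_append, h1.1, h2.1] at this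
      omega
    have hxe : (q.1 ++ q.2).take p = x := by
      rw [← e, List.append_assoc, List.take_left' hx]
    have hye : (q.1 ++ q.2).drop (p + f.length) = y := by
      rw [← e, List.drop_left' (by simp [hx])]
    refine Set.mem_prod.mpr ⟨?_, ?_⟩
    · -- x is a prefix of q.1
      have hxq : x <+: q.1 :=
        List.prefix_of_prefix_length_le ⟨f ++ y, by rw [← List.append_assoc, e]⟩
          (List.prefix_append q.1 q.2) (by rw [hx, h1.1]; omega)
      show (q.1 ++ q.2).take p ∈ langN F p
      rw [hxe]
      exact infix_mem_langN h1 hxq.isInfix hx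
    · -- y is a suffix of q.2
      have hyq : y <:+ q.2 :=
        List.suffix_of_suffix_length_le ⟨x ++ f, e⟩
          (List.suffix_append q.1 q.2) (by rw [h2.1]; omega)
      show (q.1 ++ q.2).drop (p + f.length) ∈ langN F (m + n - f.length - p)
      rw [hye]
      exact infix_mem_langN h2 hyq.isInfix (by omega)
  · rintro q ⟨h1, h2, x, y, e, hx⟩ q' ⟨h1', h2', x', y', e', hx'⟩ h
    have hxe : (q.1 ++ q.2).take p = x := by
      rw [← e, List.append_assoc, List.take_left' hx]
    have hye : (q.1 ++ q.2).drop (p + f.length) = y := by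
      rw [← e, List.drop_left' (by simp [hx])]
    have hxe' : (q'.1 ++ q'.2).take p = x' := by
      rw [← e', List.append_assoc, List.take_left' hx']
    have hye' : (q'.1 ++ q'.2).drop (p + f.length) = y' := by
      rw [← e', List.drop_left' (by simp [hx'])]
    have hfst : (q.1 ++ q.2).take p = (q'.1 ++ q'.2).take p := congrArg Prod.fst h
    have hsnd : (q.1 ++ q.2).drop (p + f.length) = (q'.1 ++ q'.2).drop (p + f.length) :=
      congrArg Prod.snd h
    have hxx : x = x' := by rw [← hxe, ← hxe', hfst]
    have hyy : y = y' := by rw [← hye, ← hye', hsnd]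
    have happ : q.1 ++ q.2 = q'.1 ++ q'.2 := by rw [← e, ← e', hxx, hyy]
    have e1 : q.1 = q'.1 := by
      rw [← List.take_left' (i := m) (l₂ := q.2) h1.1,
        ← List.take_left' (i := m) (l₂ := q'.2) h1'.1, happ]
    have e2 : q.2 = q'.2 := by
      rw [← List.drop_left' (i := m) (l₂ := q.2) h1.1,
        ← List.drop_left' (i := m) (l₂ := q'.2) h1'.1, happ]
    exact Prod.ext e1 e2

lemma bad_cover (m n : ℕ) (S : Finset (List A))
    (hS : ∀ f, f ∈ F → f.length ≤ m + n → f ∈ S) :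
    ((langN F m ×ˢ langN F n) \ Goodset F m n) ⊆
      ⋃ f ∈ S, ⋃ p ∈ Finset.Ico (m + 1 - f.length) m, BadFP F m n f p := by
  rintro q ⟨hq, hng⟩
  obtain ⟨h1, h2⟩ := Set.mem_prod.mp hq
  have hlen : (q.1 ++ q.2).length = m + n := by
    simp [List.length_append, h1.1, h2.1]
  have hex : ∃ f ∈ F, f <:+: q.1 ++ q.2 := by
    by_contra hc
    push_neg at hc
    exact hng ⟨h1, h2, hlen, hc⟩
  obtain ⟨f, hf, x, y, e⟩ := hex
  have hlens : x.length + f.length + y.length = m + n := by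
    have := congrArg List.length e
    simp only [List.length_append] at this
    have e1 := h1.1
    have e2 := h2.1
    omega
  have hpm : x.length < m := by
    by_contra hle
    push_neg at hle
    have hsuf : f ++ y <:+ q.2 :=
      List.suffix_of_suffix_length_le ⟨x, by rw [← List.append_assoc, e]⟩
        (List.suffix_append q.1 q.2) (by rw [List.length_append, h2.1]; omega)
    exact h2.2 f hf ((List.prefix_append f y).isInfix.trans hsuf.isInfix)
  have hmpf : m < x.length + f.length := by
    by_contra hle
    push_neg at hle
    have hpre : x ++ f <+: q.1 :=
      List.prefix_of_prefix_length_le ⟨y, e⟩ (List.prefix_append q.1 q.2)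
        (by rw [List.length_append, h1.1]; omega)
    exact h1.2 f hf ((List.suffix_append x f).isInfix.trans hpre.isInfix)
  refine Set.mem_iUnion₂.mpr ⟨f, hS f hf (by omega), Set.mem_iUnion₂.mpr
    ⟨x.length, Finset.mem_Ico.mpr ⟨by omega, hpm⟩, h1, h2, x, y, e, rfl⟩⟩

lemma L_pos {β : ℝ} (hF : ∀ f ∈ F, f ≠ []) (hβ : 1 < β)
    (hgrow : ∀ k : ℕ, β * ((langN F k).ncard : ℝ) ≤ ((langN F (k + 1)).ncard : ℝ)) :
    ∀ k : ℕ, 0 < ((langN F k).ncard : ℝ) := by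
  intro k
  induction k with
  | zero => rw [langN_zero hF, Set.ncard_singleton]; norm_num
  | succ k ih =>
    have h0 : (0:ℝ) < β * ((langN F k).ncard : ℝ) :=
      mul_pos (lt_trans one_pos hβ) ih
    exact lt_of_lt_of_le h0 (hgrow k)

lemma grow_pow {β : ℝ} (hβ : 1 < β)
    (hgrow : ∀ k : ℕ, β * ((langN F k).ncard : ℝ) ≤ ((langN F (k + 1)).ncard : ℝ)) :
    ∀ a k : ℕ, β ^ k * ((langN F a).ncard : ℝ) ≤ ((langN F (a + k)).ncard : ℝ) := by
  intro a k
  induction k with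
  | zero => simp
  | succ k ih =>
    have hβ0 : (0:ℝ) < β := lt_trans one_pos hβ
    calc β ^ (k+1) * ((langN F a).ncard : ℝ)
        = β * (β ^ k * ((langN F a).ncard : ℝ)) := by ring
      _ ≤ β * ((langN F (a + k)).ncard : ℝ) :=
          mul_le_mul_of_nonneg_left ih (le_of_lt hβ0)
      _ ≤ ((langN F (a + k + 1)).ncard : ℝ) := hgrow (a + k)



lemma badFP_finite (F : Set (List A)) (m n : ℕ) (f : List A) (p : ℕ) :
    (BadFP F m n f p).Finite :=
  (((langN_finite F m).prod (langN_finite F n)).subset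
    (fun q hq => Set.mem_prod.mpr ⟨hq.1, hq.2.1⟩))

lemma supermul {β : ℝ} (hF : ∀ f ∈ F, f ≠ []) (hβ : 1 < β)
    (hgrow : ∀ k : ℕ, β * ((langN F k).ncard : ℝ) ≤ ((langN F (k + 1)).ncard : ℝ))
    (hsum : Summable fun f : F =>
      (((f : List A).length : ℝ) - 1) * β ^ (-((f : List A).length : ℤ)))
    {C : ℝ}
    (hC : C = 1 - ∑' f : F, (((f : List A).length : ℝ) - 1) * β ^ (-((f : List A).length : ℤ)))
    (m n : ℕ) :
    C * (((langN F m).ncard : ℝ) * ((langN F n).ncard : ℝ)) ≤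
      ((langN F (m + n)).ncard : ℝ) := by
  classical
  have hβ0 : (0:ℝ) < β := lt_trans one_pos hβ
  have hLm0 : 0 < ((langN F m).ncard : ℝ) := L_pos hF hβ hgrow m
  have hLn0 : 0 < ((langN F n).ncard : ℝ) := L_pos hF hβ hgrow n
  set Lm : ℝ := ((langN F m).ncard : ℝ)
  set Ln : ℝ := ((langN F n).ncard : ℝ)
  have hSfin : {f | f ∈ F ∧ f.length ≤ m + n}.Finite :=
    (List.finite_length_le A (m + n)).subset fun f hf => hf.2
  set S : Finset (List A) := hSfin.toFinset with hSdef
  have hSF : ∀ f ∈ S, f ∈ F := fun f hf => (hSfin.mem_toFinset.mp hf).1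
  -- per (f, p) bound
  have hterm : ∀ f ∈ S, ∀ p ∈ Finset.Ico (m + 1 - f.length) m,
      ((BadFP F m n f p).ncard : ℝ) ≤ (β ^ f.length)⁻¹ * (Lm * Ln) := by
    intro f hfS p hp
    obtain ⟨hp1, hp2⟩ := Finset.mem_Ico.mp hp
    have hmpf : m < p + f.length := by omega
    have hbound0 : (0:ℝ) ≤ (β ^ f.length)⁻¹ * (Lm * Ln) :=
      mul_nonneg (inv_nonneg.mpr (le_of_lt (pow_pos hβ0 _)))
        (le_of_lt (mul_pos hLm0 hLn0))
    rcases Set.eq_empty_or_nonempty (BadFP F m n f p) with he | ⟨q, h1, h2, x, y, e, hx⟩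
    · rw [he]
      simpa using hbound0
    · have hlens : p + f.length + y.length = m + n := by
        have := congrArg List.length e
        simp only [List.length_append] at this
        have e1 := h1.1
        have e2 := h2.1
        omega
      set q' := m + n - f.length - p with hq'
      have hcard := badFP_card F (m := m) (n := n) hp2 hmpf
      have hcast : ((BadFP F m n f p).ncard : ℝ) ≤
          ((langN F p).ncard : ℝ) * ((langN F q').ncard : ℝ) := by
        exact_mod_cast hcard
      have g1 := grow_pow hβ hgrow p (m - p)
      have g2 := grow_pow hβ hgrow q' (n - q')
      rw [show p + (m - p) = m by omega] at g1
      rw [show q' + (n - q') = n by omega] at g2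
      have hP0 : (0:ℝ) ≤ β ^ (m - p) * ((langN F p).ncard : ℝ) :=
        mul_nonneg (le_of_lt (pow_pos hβ0 _)) (Nat.cast_nonneg _)
      have hmul := mul_le_mul g1 g2
        (mul_nonneg (le_of_lt (pow_pos hβ0 _)) (Nat.cast_nonneg _)) (le_of_lt hLm0)
      have hexp : (m - p) + (n - q') = f.length := by omega
      have hpowpos : (0:ℝ) < β ^ f.length := pow_pos hβ0 _
      rw [inv_mul_eq_div, le_div_iff₀ hpowpos]
      calc ((BadFP F m n f p).ncard : ℝ) * β ^ f.length
          ≤ (((langN F p).ncard : ℝ) * ((langN F q').ncard : ℝ)) * β ^ f.length :=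
            mul_le_mul_of_nonneg_right hcast (le_of_lt hpowpos)
        _ = (β ^ (m - p) * ((langN F p).ncard : ℝ)) *
              (β ^ (n - q') * ((langN F q').ncard : ℝ)) := by
            rw [← hexp, pow_add]; ring
        _ ≤ Lm * Ln := hmul
  -- finset sum vs tsum
  set g : List A → ℝ := fun f => ((f.length : ℝ) - 1) * β ^ (-(f.length : ℤ)) with hg
  have hgnonneg : ∀ f : F, 0 ≤ g (f : List A) := by
    intro f
    have h1 : 1 ≤ (f : List A).length := List.length_pos_iff.mpr (hF f f.2)
    apply mul_nonneg
    · have h2 : (1:ℝ) ≤ ((f : List A).length : ℝ) := by exact_mod_cast h1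
      linarith
    · exact le_of_lt (zpow_pos hβ0 _)
  have hsum_le : ∑ f ∈ S, g f ≤ 1 - C := by
    have einj : Function.Injective
        (fun x : {x // x ∈ S} => (⟨x.1, hSF x.1 x.2⟩ : F)) := by
      intro a b h
      apply Subtype.ext
      exact congrArg (fun z : ↥F => (z : List A)) h
    have e1 : ∑ f ∈ S, g f = ∑ x ∈ S.attach, g x.1 := (Finset.sum_attach S g).symm
    have e2 : ∑ x ∈ S.attach, g x.1 =
        ∑ y ∈ S.attach.map ⟨_, einj⟩, g (y : List A) := by
      rw [Finset.sum_map]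
      rfl
    have h3 := Summable.sum_le_tsum (S.attach.map ⟨_, einj⟩)
      (fun f _ => hgnonneg f) hsum
    have h4 : (∑' f : F, (((f : List A).length : ℝ) - 1) *
        β ^ (-((f : List A).length : ℤ))) = 1 - C := by rw [hC]; ring
    rw [e1, e2]
    calc ∑ y ∈ S.attach.map ⟨_, einj⟩, g (y : List A)
        ≤ ∑' f : F, (((f : List A).length : ℝ) - 1) * β ^ (-((f : List A).length : ℤ)) := h3
      _ = 1 - C := h4
  -- bad set bound
  set Bad := (langN F m ×ˢ langN F n) \ Goodset F m n with hBadDef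
  have hcover := bad_cover m n S (fun f hf hl => hSfin.mem_toFinset.mpr ⟨hf, hl⟩)
  have hUfin : (⋃ f ∈ S, ⋃ p ∈ Finset.Ico (m + 1 - f.length) m, BadFP F m n f p).Finite :=
    Set.Finite.biUnion S.finite_toSet fun f _ =>
      Set.Finite.biUnion (Finset.Ico _ _).finite_toSet fun p _ => badFP_finite F m n f p
  have hb1 : (Bad.ncard : ℝ) ≤ ∑ f ∈ S, ∑ p ∈ Finset.Ico (m + 1 - f.length) m,
      ((BadFP F m n f p).ncard : ℝ) := by
    have hn1 : Bad.ncard ≤ ∑ f ∈ S, ∑ p ∈ Finset.Ico (m + 1 - f.length) m,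
        (BadFP F m n f p).ncard := by
      calc Bad.ncard
          ≤ (⋃ f ∈ S, ⋃ p ∈ Finset.Ico (m + 1 - f.length) m, BadFP F m n f p).ncard :=
            Set.ncard_le_ncard hcover hUfin
        _ ≤ ∑ f ∈ S, (⋃ p ∈ Finset.Ico (m + 1 - f.length) m, BadFP F m n f p).ncard :=
            ncard_biUnion_le' _ _
        _ ≤ ∑ f ∈ S, ∑ p ∈ Finset.Ico (m + 1 - f.length) m, (BadFP F m n f p).ncard :=
            Finset.sum_le_sum fun f _ => ncard_biUnion_le' _ _
    calc (Bad.ncard : ℝ) ≤ ((∑ f ∈ S, ∑ p ∈ Finset.Ico (m + 1 - f.length) m,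
        (BadFP F m n f p).ncard : ℕ) : ℝ) := by exact_mod_cast hn1
      _ = _ := by push_cast; rfl
  have hb2 : (Bad.ncard : ℝ) ≤ (1 - C) * (Lm * Ln) := by
    have hinner : ∀ f ∈ S, ∑ p ∈ Finset.Ico (m + 1 - f.length) m,
        ((BadFP F m n f p).ncard : ℝ) ≤ g f * (Lm * Ln) := by
      intro f hfS
      have hf1 : 1 ≤ f.length := List.length_pos_iff.mpr (hF f (hSF f hfS))
      have hcard : ((Finset.Ico (m + 1 - f.length) m).card : ℝ) ≤ (f.length : ℝ) - 1 := by
        rw [Nat.card_Ico]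
        have : m - (m + 1 - f.length) ≤ f.length - 1 := by omega
        calc ((m - (m + 1 - f.length) : ℕ) : ℝ) ≤ ((f.length - 1 : ℕ) : ℝ) := by
              exact_mod_cast this
          _ = (f.length : ℝ) - 1 := by
              push_cast [hf1]
              ring
      have hbound0 : (0:ℝ) ≤ (β ^ f.length)⁻¹ * (Lm * Ln) :=
        mul_nonneg (inv_nonneg.mpr (le_of_lt (pow_pos hβ0 _)))
          (le_of_lt (mul_pos hLm0 hLn0))
      calc ∑ p ∈ Finset.Ico (m + 1 - f.length) m, ((BadFP F m n f p).ncard : ℝ)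
          ≤ (Finset.Ico (m + 1 - f.length) m).card • ((β ^ f.length)⁻¹ * (Lm * Ln)) :=
            Finset.sum_le_card_nsmul _ _ _ (hterm f hfS)
        _ = ((Finset.Ico (m + 1 - f.length) m).card : ℝ) * ((β ^ f.length)⁻¹ * (Lm * Ln)) := by
            rw [nsmul_eq_mul]
        _ ≤ ((f.length : ℝ) - 1) * ((β ^ f.length)⁻¹ * (Lm * Ln)) :=
            mul_le_mul_of_nonneg_right hcard hbound0
        _ = g f * (Lm * Ln) := by
            rw [hg]
            simp only
            rw [zpow_neg, zpow_natCast]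
            ring
    calc (Bad.ncard : ℝ)
        ≤ ∑ f ∈ S, ∑ p ∈ Finset.Ico (m + 1 - f.length) m, ((BadFP F m n f p).ncard : ℝ) := hb1
      _ ≤ ∑ f ∈ S, g f * (Lm * Ln) := Finset.sum_le_sum hinner
      _ = (∑ f ∈ S, g f) * (Lm * Ln) := (Finset.sum_mul _ _ _).symm
      _ ≤ (1 - C) * (Lm * Ln) :=
          mul_le_mul_of_nonneg_right hsum_le (le_of_lt (mul_pos hLm0 hLn0))
  -- good set bound and conclusion
  have hgood : ((Goodset F m n).ncard : ℝ) ≤ ((langN F (m + n)).ncard : ℝ) := by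
    exact_mod_cast good_card F m n
  have hsub : Goodset F m n ⊆ langN F m ×ˢ langN F n :=
    fun q hq => Set.mem_prod.mpr ⟨hq.1, hq.2.1⟩
  have hsplitN : (langN F m ×ˢ langN F n).ncard ≤ (Goodset F m n).ncard + Bad.ncard := by
    calc (langN F m ×ˢ langN F n).ncard = (Goodset F m n ∪ Bad).ncard := by
          rw [hBadDef, Set.union_diff_cancel hsub]
      _ ≤ _ := Set.ncard_union_le _ _
  have hprod : ((langN F m ×ˢ langN F n).ncard : ℝ) = Lm * Ln := by
    rw [ncard_prod']
    push_cast
    rfl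
  have hsplit : Lm * Ln ≤ ((Goodset F m n).ncard : ℝ) + (Bad.ncard : ℝ) := by
    rw [← hprod]
    exact_mod_cast hsplitN
  linarith


lemma L_pow_le (hF : ∀ f ∈ F, f ≠ []) (n : ℕ) :
    ∀ k : ℕ, (langN F (k * n)).ncard ≤ (langN F n).ncard ^ k := by
  intro k
  induction k with
  | zero =>
    rw [Nat.zero_mul, langN_zero hF, Set.ncard_singleton, pow_zero]
  | succ k ih =>
    have he : (k + 1) * n = k * n + n := by ring
    rw [he, pow_succ]
    exact le_trans (L_submul F (k * n) n) (Nat.mul_le_mul_right _ ih)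

lemma L_lower_pow {β : ℝ} (hF : ∀ f ∈ F, f ≠ []) (hβ : 1 < β)
    (hgrow : ∀ k : ℕ, β * ((langN F k).ncard : ℝ) ≤ ((langN F (k + 1)).ncard : ℝ))
    (hsum : Summable fun f : F =>
      (((f : List A).length : ℝ) - 1) * β ^ (-((f : List A).length : ℤ)))
    {C : ℝ}
    (hC : C = 1 - ∑' f : F, (((f : List A).length : ℝ) - 1) * β ^ (-((f : List A).length : ℤ)))
    (hCpos : 0 < C) (n : ℕ) :
    ∀ k : ℕ, C ^ k * ((langN F n).ncard : ℝ) ^ (k + 1) ≤ ((langN F ((k + 1) * n)).ncard : ℝ) := by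
  intro k
  induction k with
  | zero => simp
  | succ k ih =>
    have he : (k + 2) * n = (k + 1) * n + n := by ring
    have hLn0 : (0:ℝ) ≤ ((langN F n).ncard : ℝ) := Nat.cast_nonneg _
    calc C ^ (k + 1) * ((langN F n).ncard : ℝ) ^ (k + 2)
        = C * ((C ^ k * ((langN F n).ncard : ℝ) ^ (k + 1)) * ((langN F n).ncard : ℝ)) := by
          ring
      _ ≤ C * (((langN F ((k + 1) * n)).ncard : ℝ) * ((langN F n).ncard : ℝ)) := by
          apply mul_le_mul_of_nonneg_left
            (mul_le_mul_of_nonneg_right ih hLn0) (le_of_lt hCpos)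
      _ ≤ ((langN F ((k + 1) * n + n)).ncard : ℝ) := supermul hF hβ hgrow hsum hC _ _
      _ = ((langN F ((k + 2) * n)).ncard : ℝ) := by rw [← he]

end Aux



/-- Suppose `β > 1` satisfies `|ℒ_{n+1}(𝒜,ℱ)| ≥ β·|ℒ_n(𝒜,ℱ)|` for all `n`, and
`C := 1 − Σ_{f∈ℱ} (|f|−1)·β^(−|f|) > 0`. Then for all `n`,
`α(𝒜,ℱ)^n ≤ |ℒ_n(𝒜,ℱ)| ≤ C⁻¹·α(𝒜,ℱ)^n`, where `α(𝒜,ℱ)` is the growth rate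
`lim_n |ℒ_n(𝒜,ℱ)|^(1/n)`. -/
theorem stmt4 {A : Type*} [Fintype A] (F : Set (List A))
    (hF : ∀ f ∈ F, f ≠ ([] : List A)) (β : ℝ) (hβ : 1 < β)
    (hgrow : ∀ n : ℕ, β * ((langN F n).ncard : ℝ) ≤ ((langN F (n + 1)).ncard : ℝ))
    (hsum : Summable fun f : F =>
      (((f : List A).length : ℝ) - 1) * β ^ (-((f : List A).length : ℤ)))
    (C : ℝ)
    (hC : C = 1 - ∑' f : F, (((f : List A).length : ℝ) - 1) * β ^ (-((f : List A).length : ℤ)))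
    (hCpos : 0 < C) :
    ∀ α : ℝ,
      Tendsto (fun n : ℕ => ((langN F n).ncard : ℝ) ^ (1 / (n : ℝ))) atTop (nhds α) →
      ∀ n : ℕ, α ^ n ≤ ((langN F n).ncard : ℝ) ∧ ((langN F n).ncard : ℝ) ≤ C⁻¹ * α ^ n := by
  intro α hα n
  have hC1 : C ≤ 1 := by
    rw [hC]
    have h0 : 0 ≤ ∑' f : F, (((f : List A).length : ℝ) - 1) *
        β ^ (-((f : List A).length : ℤ)) := by
      apply tsum_nonneg
      intro f
      have h1 : 1 ≤ (f : List A).length := List.length_pos_iff.mpr (hF f f.2)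
      apply mul_nonneg
      · have h2 : (1:ℝ) ≤ ((f : List A).length : ℝ) := by exact_mod_cast h1
        linarith
      · exact le_of_lt (zpow_pos (lt_trans one_pos hβ) _)
    linarith
  have hC0 : (0:ℝ) ≤ C := le_of_lt hCpos
  have hα0 : 0 ≤ α := by
    apply ge_of_tendsto hα
    filter_upwards with j
    exact Real.rpow_nonneg (Nat.cast_nonneg _) _
  rcases Nat.eq_zero_or_pos n with rfl | hn
  · constructor
    · rw [pow_zero, langN_zero hF, Set.ncard_singleton, Nat.cast_one]
    · rw [pow_zero, langN_zero hF, Set.ncard_singleton, Nat.cast_one, mul_one]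
      have hCinv : 0 < C⁻¹ := inv_pos.mpr hCpos
      nlinarith [mul_inv_cancel₀ (ne_of_gt hCpos)]
  have hn0 : (n:ℝ) ≠ 0 := Nat.cast_ne_zero.mpr (by omega)
  have hnpos : (0:ℝ) < (n:ℝ) := Nat.cast_pos.mpr hn
  have hLn0 : (0:ℝ) ≤ ((langN F n).ncard : ℝ) := Nat.cast_nonneg _
  have hsub : Tendsto (fun k : ℕ => ((langN F (k * n)).ncard : ℝ) ^ (1 / ((k * n : ℕ) : ℝ)))
      atTop (nhds α) :=
    hα.comp (tendsto_atTop_mono (fun k => Nat.le_mul_of_pos_right k hn) tendsto_id)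
  have hαle : α ≤ ((langN F n).ncard : ℝ) ^ (1 / (n:ℝ)) := by
    apply le_of_tendsto hsub
    filter_upwards [eventually_ge_atTop 1] with k hk
    have hk0 : (k:ℝ) ≠ 0 := Nat.cast_ne_zero.mpr (by omega)
    have h1 : ((langN F (k * n)).ncard : ℝ) ≤ ((langN F n).ncard : ℝ) ^ k := by
      exact_mod_cast L_pow_le hF n k
    calc ((langN F (k * n)).ncard : ℝ) ^ (1 / ((k * n : ℕ) : ℝ))
        ≤ (((langN F n).ncard : ℝ) ^ k) ^ (1 / ((k * n : ℕ) : ℝ)) :=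
          Real.rpow_le_rpow (Nat.cast_nonneg _) h1 (by positivity)
      _ = ((langN F n).ncard : ℝ) ^ ((k:ℝ) * (1 / ((k * n : ℕ) : ℝ))) := by
          rw [← Real.rpow_natCast ((langN F n).ncard : ℝ) k,
            ← Real.rpow_mul (Nat.cast_nonneg _)]
      _ = ((langN F n).ncard : ℝ) ^ (1 / (n:ℝ)) := by
          congr 1
          push_cast
          field_simp
  have hαge : C ^ (1 / (n:ℝ)) * ((langN F n).ncard : ℝ) ^ (1 / (n:ℝ)) ≤ α := by
    apply ge_of_tendsto hsub
    filter_upwards [eventually_ge_atTop 1] with k hk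
    obtain ⟨k', rfl⟩ : ∃ k', k = k' + 1 := ⟨k - 1, by omega⟩
    have h1 : C ^ k' * ((langN F n).ncard : ℝ) ^ (k' + 1) ≤
        ((langN F ((k' + 1) * n)).ncard : ℝ) :=
      L_lower_pow hF hβ hgrow hsum hC hCpos n k'
    have hkn : (0:ℝ) < (((k' + 1) * n : ℕ) : ℝ) := by
      have h2 : 0 < (k' + 1) * n := Nat.mul_pos (by omega) hn
      exact_mod_cast h2
    have hexp0 : 0 ≤ 1 / (((k' + 1) * n : ℕ) : ℝ) := by positivity
    calc C ^ (1/(n:ℝ)) * ((langN F n).ncard : ℝ) ^ (1/(n:ℝ))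
        ≤ C ^ ((k':ℝ) * (1 / (((k' + 1) * n : ℕ) : ℝ))) *
            ((langN F n).ncard : ℝ) ^ (1/(n:ℝ)) := by
          apply mul_le_mul_of_nonneg_right _ (Real.rpow_nonneg hLn0 _)
          apply Real.rpow_le_rpow_of_exponent_ge hCpos hC1
          rw [mul_one_div, div_le_div_iff₀ hkn hnpos]
          push_cast
          nlinarith [hnpos]
      _ = (C ^ k') ^ (1 / (((k' + 1) * n : ℕ) : ℝ)) *
            (((langN F n).ncard : ℝ) ^ (k' + 1)) ^ (1 / (((k' + 1) * n : ℕ) : ℝ)) := by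
          rw [← Real.rpow_natCast C k', ← Real.rpow_mul hC0]
          congr 1
          rw [← Real.rpow_natCast ((langN F n).ncard : ℝ) (k' + 1),
            ← Real.rpow_mul hLn0]
          congr 1
          push_cast
          field_simp
      _ = (C ^ k' * ((langN F n).ncard : ℝ) ^ (k' + 1)) ^ (1 / (((k' + 1) * n : ℕ) : ℝ)) :=
          (Real.mul_rpow (pow_nonneg hC0 _) (pow_nonneg hLn0 _)).symm
      _ ≤ ((langN F ((k' + 1) * n)).ncard : ℝ) ^ (1 / (((k' + 1) * n : ℕ) : ℝ)) :=
          Real.rpow_le_rpow (by positivity) h1 hexp0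
  constructor
  · have h2 := pow_le_pow_left₀ hα0 hαle n
    rwa [← Real.rpow_natCast (((langN F n).ncard : ℝ) ^ (1/(n:ℝ))) n,
      ← Real.rpow_mul hLn0, one_div, inv_mul_cancel₀ hn0, Real.rpow_one] at h2
  · have hprod0 : 0 ≤ C ^ (1/(n:ℝ)) * ((langN F n).ncard : ℝ) ^ (1/(n:ℝ)) :=
      mul_nonneg (Real.rpow_nonneg hC0 _) (Real.rpow_nonneg hLn0 _)
    have h2 := pow_le_pow_left₀ hprod0 hαge n
    have h3 : (C ^ (1/(n:ℝ)) * ((langN F n).ncard : ℝ) ^ (1/(n:ℝ))) ^ n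
        = C * ((langN F n).ncard : ℝ) := by
      rw [mul_pow, ← Real.rpow_natCast (C ^ (1/(n:ℝ))) n, ← Real.rpow_mul hC0,
        ← Real.rpow_natCast (((langN F n).ncard : ℝ) ^ (1/(n:ℝ))) n,
        ← Real.rpow_mul hLn0, one_div, inv_mul_cancel₀ hn0, Real.rpow_one,
        Real.rpow_one]
    rw [h3] at h2
    rw [inv_mul_eq_div, le_div_iff₀ hCpos]
    linarith [h2, mul_comm C ((langN F n).ncard : ℝ)]
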